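/- Let t_k = ((1/2)_k/(1)_k)^4 and let m be a positive even integer. Then there exist integers c, c' and a polynomial x ∈ ℤ[k] such that for all integers k ≥ 0: (m-1)!! · (4k+1)^m t_k = ( c + c'(4k+1)^2 ) t_k + Δ_k( 64 k^4 x(4k) t_k ). -/
import Mathlib
open Polynomial

noncomputable section
def Lq17 (x : Polynomial ℤ) : Polynomial ℚ :=
  C ((4:ℚ)⁻¹) * ((X + 2) ^ 4 * ((x.map (Int.castRingHom ℚ)).comp (X + 4))
    - X ^ 4 * (x.map (Int.castRingHom ℚ)))

def Good17 (p : Polynomial ℚ) : Prop :=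
  ∃ (c c' : ℤ) (x : Polynomial ℤ),
    p = C (c : ℚ) + C (c' : ℚ) * (X + 1) ^ 2 + Lq17 x

lemma coeff_comp_neg_X' (p : Polynomial ℤ) (n : ℕ) :
    (p.comp (-X)).coeff n = (-1) ^ n * p.coeff n := by
  induction p using Polynomial.induction_on' with
  | add f g hf hg => simp [add_comp, hf, hg]; ring
  | monomial m a =>
      rw [monomial_comp, show ((-X : Polynomial ℤ)) = C (-1) * X by simp, mul_pow, ← C_pow,
        ← mul_assoc, ← C_mul]
      rw [coeff_C_mul, coeff_X_pow, coeff_monomial]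
      rcases eq_or_ne n m with rfl | hnm
      · simp [mul_comm]
      · simp [hnm, Ne.symm hnm]

lemma even_decomp' (p : Polynomial ℤ) (hp : p.comp (-X) = p) :
    ∃ g : Polynomial ℤ, (∀ i, g.coeff i = p.coeff (2 * i)) ∧ g.comp (X ^ 2) = p := by
  have hodd : ∀ n : ℕ, ¬ (2 ∣ n) → p.coeff n = 0 := by
    intro n hn
    have h := coeff_comp_neg_X' p n
    rw [hp] at h
    have hodd : Odd n := Nat.odd_iff.mpr (by omega)
    rw [hodd.neg_one_pow] at h
    linarith
  refine ⟨p.contract 2, fun i => by rw [coeff_contract two_ne_zero, mul_comm], ?_⟩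
  rw [← expand_eq_comp_X_pow]
  ext n
  rw [coeff_expand (by norm_num : 0 < 2), coeff_contract two_ne_zero]
  split_ifs with h
  · rw [Nat.div_mul_cancel h]
  · exact (hodd n h).symm

lemma key17 (s : ℕ) : ∃ (x r : Polynomial ℤ), r.natDegree ≤ s + 1 ∧
    C ((2 * (s:ℚ) + 3)) * ((X + 1) ^ 2) ^ (s + 2)
      = Lq17 x + ((r.map (Int.castRingHom ℚ)).comp ((X + 1) ^ 2)) := by
  set d : ℕ := 2 * s + 1 with hd
  have hd_odd : Odd d := ⟨s, by omega⟩
  set P1 : Polynomial ℤ := (X + C 1) ^ 4 * (X + C 2) ^ d with hP1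
  set P2 : Polynomial ℤ := (X + C (-1)) ^ 4 * (X + C (-2)) ^ d with hP2
  set F : Polynomial ℤ := P1 - P2 with hF
  have hm1 : P1.Monic := ((monic_X_add_C (1:ℤ)).pow 4).mul ((monic_X_add_C (2:ℤ)).pow d)
  have hm2 : P2.Monic := ((monic_X_add_C (-1:ℤ)).pow 4).mul ((monic_X_add_C (-2:ℤ)).pow d)
  have hdeg1 : P1.natDegree = d + 4 := by
    rw [hP1, (((monic_X_add_C (1:ℤ)).pow 4)).natDegree_mul ((monic_X_add_C (2:ℤ)).pow d),
      natDegree_pow, natDegree_pow, natDegree_X_add_C, natDegree_X_add_C]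
    ring
  have hdeg2 : P2.natDegree = d + 4 := by
    rw [hP2, (((monic_X_add_C (-1:ℤ)).pow 4)).natDegree_mul ((monic_X_add_C (-2:ℤ)).pow d),
      natDegree_pow, natDegree_pow, natDegree_X_add_C, natDegree_X_add_C]
    ring
  have hdegeq : P1.degree = P2.degree := by
    rw [degree_eq_natDegree hm1.ne_zero, degree_eq_natDegree hm2.ne_zero, hdeg1, hdeg2]
  have hFdeg : F.natDegree ≤ d + 3 := by
    rcases eq_or_ne F 0 with h0 | h0
    · simp [h0]
    · have h := degree_sub_lt hdegeq hm1.ne_zero (by rw [hm1.leadingCoeff, hm2.leadingCoeff])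
      rw [degree_eq_natDegree hm1.ne_zero, hdeg1] at h
      have := (natDegree_lt_iff_degree_lt h0).mpr (by exact_mod_cast h)
      omega
  -- the subleading coefficient of F
  have hnext1 : P1.nextCoeff = 2 * (d : ℤ) + 4 := by
    rw [hP1, Monic.nextCoeff_mul ((monic_X_add_C (1:ℤ)).pow 4) ((monic_X_add_C (2:ℤ)).pow d),
      Monic.nextCoeff_pow (monic_X_add_C (1:ℤ)), Monic.nextCoeff_pow (monic_X_add_C (2:ℤ)),
      nextCoeff_X_add_C, nextCoeff_X_add_C]
    push_cast
    ring
  have hnext2 : P2.nextCoeff = -(2 * (d : ℤ) + 4) := by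
    rw [hP2, Monic.nextCoeff_mul ((monic_X_add_C (-1:ℤ)).pow 4) ((monic_X_add_C (-2:ℤ)).pow d),
      Monic.nextCoeff_pow (monic_X_add_C (-1:ℤ)), Monic.nextCoeff_pow (monic_X_add_C (-2:ℤ)),
      nextCoeff_X_add_C, nextCoeff_X_add_C]
    push_cast
    ring
  have hFtop : F.coeff (d + 3) = 4 * (d : ℤ) + 8 := by
    have h1 : P1.coeff (d + 3) = P1.nextCoeff := by
      rw [nextCoeff, hdeg1]; simp
    have h2 : P2.coeff (d + 3) = P2.nextCoeff := by
      rw [nextCoeff, hdeg2]; simp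
    rw [hF, coeff_sub, h1, h2, hnext1, hnext2]
    ring
  -- F is even
  have hFeven : F.comp (-X) = F := by
    have c1 : ((-X + C (1:ℤ))) ^ 4 = (X + C (-1 : ℤ)) ^ 4 := by
      rw [show (-X + C (1:ℤ)) = -(X + C (-1)) by rw [map_neg]; ring]
      exact Even.neg_pow ⟨2, rfl⟩ _
    have c2 : ((-X + C (2:ℤ))) ^ d = -((X + C (-2 : ℤ)) ^ d) := by
      rw [show (-X + C (2:ℤ)) = -(X + C (-2)) by rw [map_neg]; ring]
      exact Odd.neg_pow hd_odd _
    have c3 : ((-X + C (-1:ℤ))) ^ 4 = (X + C (1 : ℤ)) ^ 4 := by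
      rw [show (-X + C (-1:ℤ)) = -(X + C 1) by rw [map_neg]; ring]
      exact Even.neg_pow ⟨2, rfl⟩ _
    have c4 : ((-X + C (-2:ℤ))) ^ d = -((X + C (2 : ℤ)) ^ d) := by
      rw [show (-X + C (-2:ℤ)) = -(X + C 2) by rw [map_neg]; ring]
      exact Odd.neg_pow hd_odd _
    rw [hF, hP1, hP2]
    simp only [sub_comp, mul_comp, pow_comp, add_comp, X_comp, C_comp]
    rw [c1, c2, c3, c4]
    ring
  -- coefficients of F are divisible by 4
  have hFdvd : ∀ n, (4:ℤ) ∣ F.coeff n := by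
    have hmap : F.map (Int.castRingHom (ZMod 4)) = 0 := by
      have h8a : ((8 : Polynomial (ZMod 4))) = 0 := by
        rw [← map_ofNat (C : ZMod 4 →+* Polynomial (ZMod 4)) 8, show (8:ZMod 4) = 0 by decide,
          map_zero]
      have hA : (X + C ((1:ℤ):ZMod 4)) ^ 4 = (X + C ((-1:ℤ):ZMod 4)) ^ 4 := by
        simp only [Int.cast_one, Int.cast_neg, map_one, map_neg]
        linear_combination (X ^ 3 + X) * h8a
      have hB : (X + C ((2:ℤ):ZMod 4)) = (X + C ((-2:ℤ):ZMod 4)) := by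
        rw [show ((2:ℤ):ZMod 4) = ((-2:ℤ):ZMod 4) by decide]
      rw [hF, hP1, hP2]
      simp only [Polynomial.map_sub, Polynomial.map_mul, Polynomial.map_pow, Polynomial.map_add,
        map_X, map_C, Int.coe_castRingHom]
      rw [hA, hB]
      ring
    intro n
    have := congrArg (fun p => Polynomial.coeff p n) hmap
    simp only [coeff_map, Int.coe_castRingHom, coeff_zero] at this
    exact (ZMod.intCast_zmod_eq_zero_iff_dvd _ 4).mp this
  -- even decomposition
  obtain ⟨g, hgc, hgcomp⟩ := even_decomp' F hFeven
  have hgdvd : C (4:ℤ) ∣ g := by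
    rw [C_dvd_iff_dvd_coeff]
    intro i
    rw [hgc]
    exact hFdvd _
  obtain ⟨q, hq⟩ := hgdvd
  have hqc : ∀ i, 4 * q.coeff i = F.coeff (2 * i) := by
    intro i
    rw [← hgc, hq, coeff_C_mul]
  have hqtop : q.coeff (s + 2) = 2 * (s:ℤ) + 3 := by
    have h := hqc (s + 2)
    rw [show 2 * (s + 2) = d + 3 by omega, hFtop] at h
    have : (d:ℤ) = 2 * s + 1 := by exact_mod_cast congrArg (Nat.cast : ℕ → ℤ) hd
    omega
  have hqdeg : q.natDegree ≤ s + 2 := by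
    rw [natDegree_le_iff_coeff_eq_zero]
    intro m hm
    have h := hqc m
    rw [coeff_eq_zero_of_natDegree_lt (lt_of_le_of_lt hFdeg (by omega))] at h
    omega
  set r : Polynomial ℤ := C (2 * (s:ℤ) + 3) * X ^ (s + 2) - q with hr
  have hrdeg : r.natDegree ≤ s + 1 := by
    rw [natDegree_le_iff_coeff_eq_zero]
    intro m hm
    rw [hr, coeff_sub, coeff_C_mul, coeff_X_pow]
    rcases eq_or_ne m (s + 2) with rfl | hne
    · simp [hqtop]
    · rw [if_neg hne, coeff_eq_zero_of_natDegree_lt (lt_of_le_of_lt hqdeg (by omega))]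
      ring
  refine ⟨(X + C (-1:ℤ)) ^ d, r, hrdeg, ?_⟩
  have hq' : q = C (2 * (s:ℤ) + 3) * X ^ (s + 2) - r := by rw [hr]; ring
  have step1 : Lq17 ((X + C (-1:ℤ)) ^ d)
      = C ((4:ℚ)⁻¹) * ((F.map (Int.castRingHom ℚ)).comp (X + 1)) := by
    rw [Lq17, hF, hP1, hP2]
    simp only [Polynomial.map_sub, Polynomial.map_mul, Polynomial.map_pow, Polynomial.map_add,
      map_X, map_C, Int.coe_castRingHom, sub_comp, mul_comp, pow_comp, add_comp, X_comp, C_comp,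
      Int.cast_neg, Int.cast_one, Int.cast_two, map_one, map_neg, map_ofNat,
      Polynomial.map_one, Polynomial.map_neg, Polynomial.map_ofNat, one_comp, neg_comp, ofNat_comp]
    ring
  have step2 : (F.map (Int.castRingHom ℚ)).comp (X + 1)
      = ((g.map (Int.castRingHom ℚ)).comp ((X + 1) ^ 2)) := by
    rw [← hgcomp, Polynomial.map_comp, comp_assoc]
    simp only [Polynomial.map_pow, map_X, pow_comp, X_comp]
  have step3 : (g.map (Int.castRingHom ℚ)).comp ((X + 1) ^ 2)
      = C (4:ℚ) * ((C ((2 * (s:ℚ) + 3)) * ((X + 1) ^ 2) ^ (s + 2))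
          - (r.map (Int.castRingHom ℚ)).comp ((X + 1) ^ 2)) := by
    rw [hq, hq']
    simp only [Polynomial.map_mul, Polynomial.map_sub, Polynomial.map_pow, map_C, map_X,
      Int.coe_castRingHom, mul_comp, sub_comp, pow_comp, C_comp, X_comp]
    push_cast
    ring
  rw [step1, step2, step3, ← mul_assoc, ← C_mul]
  norm_num

lemma Good17_zero : Good17 0 := ⟨0, 0, 0, by simp [Lq17]⟩

lemma Good17_add' {p q : Polynomial ℚ} (hp : Good17 p) (hq : Good17 q) : Good17 (p + q) := by
  obtain ⟨c, c', x, rfl⟩ := hp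
  obtain ⟨e, e', y, rfl⟩ := hq
  refine ⟨c + e, c' + e', x + y, ?_⟩
  have : Lq17 (x + y) = Lq17 x + Lq17 y := by
    simp only [Lq17, Polynomial.map_add, add_comp]; ring
  rw [this]
  push_cast [C_add]
  ring

lemma Good17_C_mul' (a : ℤ) {p : Polynomial ℚ} (hp : Good17 p) : Good17 (C (a : ℚ) * p) := by
  obtain ⟨c, c', x, rfl⟩ := hp
  refine ⟨a * c, a * c', C a * x, ?_⟩
  have : Lq17 (C a * x) = C ((a:ℚ)) * Lq17 x := by
    simp only [Lq17, Polynomial.map_mul, map_C, mul_comp, C_comp, Int.coe_castRingHom]; ring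
  rw [this]
  push_cast [C_mul]
  ring

lemma Good17_C' (c : ℤ) : Good17 (C (c : ℚ)) := ⟨c, 0, 0, by simp [Lq17]⟩

lemma Good17_CU' (c' : ℤ) : Good17 (C (c' : ℚ) * (X + 1) ^ 2) := ⟨0, c', 0, by simp [Lq17]⟩

lemma Good17_sum {α : Type*} (t : Finset α) (f : α → Polynomial ℚ)
    (h : ∀ i ∈ t, Good17 (f i)) : Good17 (∑ i ∈ t, f i) :=
  Finset.sum_induction f Good17 (fun _ _ ha hb => Good17_add' ha hb) Good17_zero h

lemma df_dvd17 : ∀ i j : ℕ, i ≤ j →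
    Nat.doubleFactorial (2 * i + 1) ∣ Nat.doubleFactorial (2 * j + 1) := by
  intro i j
  induction j with
  | zero => intro h; interval_cases i; rfl
  | succ j ih =>
      intro h
      rcases eq_or_lt_of_le h with rfl | h'
      · rfl
      · have : i ≤ j := by omega
        refine (ih this).trans ?_
        rw [show 2 * (j + 1) + 1 = (2 * j + 1) + 2 by ring, Nat.doubleFactorial_add_two]
        exact dvd_mul_left _ _

lemma main17 : ∀ s : ℕ, Good17 (C ((Nat.doubleFactorial (2 * s + 1) : ℚ)) * ((X + 1) ^ 2) ^ (s + 1)) := by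
  intro s
  induction s using Nat.strong_induction_on with
  | _ s ih =>
    match s with
    | 0 =>
        have : (Nat.doubleFactorial (2 * 0 + 1) : ℚ) = ((1 : ℤ) : ℚ) := by norm_num [Nat.doubleFactorial]
        rw [this, pow_one]
        exact Good17_CU' 1
    | (s + 1) =>
        obtain ⟨x, r, hrdeg, hkey⟩ := key17 s
        set D : ℤ := (Nat.doubleFactorial (2 * s + 1) : ℤ) with hD
        set U : Polynomial ℚ := (X + 1) ^ 2 with hU
        have hexp : ((r.map (Int.castRingHom ℚ)).comp U)
            = ∑ i ∈ Finset.range (s + 2), C ((r.coeff i : ℚ)) * U ^ i := by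
          have h1 : r.map (Int.castRingHom ℚ)
              = ∑ i ∈ Finset.range (s + 2), C ((r.coeff i : ℚ)) * X ^ i := by
            conv_lhs => rw [(r.map (Int.castRingHom ℚ)).as_sum_range' (s + 2)
              (lt_of_le_of_lt (natDegree_map_le) (by omega))]
            refine Finset.sum_congr rfl fun i _ => ?_
            rw [← C_mul_X_pow_eq_monomial, coeff_map, Int.coe_castRingHom]
          rw [h1, sum_comp]
          refine Finset.sum_congr rfl fun i _ => ?_
          rw [mul_comp, C_comp, pow_comp, X_comp]
        have htarget : C ((Nat.doubleFactorial (2 * (s + 1) + 1) : ℚ)) * U ^ (s + 2)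
            = (∑ i ∈ Finset.range (s + 2), C (((D * r.coeff i : ℤ) : ℚ)) * U ^ i)
              + Lq17 (C D * x) := by
          have hdf : (Nat.doubleFactorial (2 * (s + 1) + 1) : ℚ)
              = (D : ℚ) * (2 * (s : ℚ) + 3) := by
            rw [show 2 * (s + 1) + 1 = (2 * s + 1) + 2 by ring, Nat.doubleFactorial_add_two, hD]
            push_cast
            ring
          have hL : Lq17 (C D * x) = C ((D : ℚ)) * Lq17 x := by
            simp only [Lq17, Polynomial.map_mul, map_C, mul_comp, C_comp, Int.coe_castRingHom]
            ring
          rw [hdf, hL]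
          rw [show (C ((D:ℚ) * (2 * (s : ℚ) + 3)) : Polynomial ℚ)
            = C ((D:ℚ)) * C ((2 * (s : ℚ) + 3)) from by rw [C_mul]]
          rw [mul_assoc, hkey, hexp, mul_add, Finset.mul_sum, add_comm]
          congr 1
          refine Finset.sum_congr rfl fun i _ => ?_
          rw [← mul_assoc, ← C_mul]
          push_cast
          ring
        rw [show s + 1 + 1 = s + 2 from rfl, htarget]
        refine Good17_add' (Good17_sum _ _ ?_) ⟨0, 0, C D * x, by simp⟩
        intro i hi
        rw [Finset.mem_range] at hi
        match i with
        | 0 => simpa using Good17_C' (D * r.coeff 0)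
        | (i + 1) =>
            obtain ⟨e, he⟩ := df_dvd17 i s (by omega)
            have : ((D * r.coeff (i + 1) : ℤ) : ℚ)
                = ((r.coeff (i + 1) * e : ℤ) : ℚ) * ((Nat.doubleFactorial (2 * i + 1) : ℚ)) := by
              rw [hD]
              push_cast [he]
              ring
            rw [this, C_mul, mul_assoc]
            exact Good17_C_mul' _ (ih i (by omega))

/-- for t_k = ((1/2)_k/(1)_k)^4 and even positive m, there are integers
c, c' and x ∈ ℤ[k] with
(m-1)!!·(4k+1)^m t_k = (c + c'(4k+1)^2) t_k + Δ_k(64 k^4 x(4k) t_k). -/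
theorem stmt17 (m : ℕ) (hm : Even m) (hm0 : 0 < m)
    (t : ℕ → ℚ)
    (ht : ∀ k : ℕ, t k =
      ((∏ i ∈ Finset.range k, ((1 : ℚ) / 2 + i)) / (Nat.factorial k)) ^ 4) :
    ∃ (c c' : ℤ) (x : Polynomial ℤ), ∀ k : ℕ,
      (Nat.doubleFactorial (m - 1) : ℚ) * (4 * (k : ℚ) + 1) ^ m * t k
        = ((c : ℚ) + (c' : ℚ) * (4 * (k : ℚ) + 1) ^ 2) * t k
          + (64 * ((k : ℚ) + 1) ^ 4 * ((x.eval (4 * ((k : ℤ) + 1)) : ℤ) : ℚ) * t (k + 1)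
            - 64 * (k : ℚ) ^ 4 * ((x.eval (4 * (k : ℤ)) : ℤ) : ℚ) * t k) := by
  obtain ⟨w, hw⟩ := hm
  have hw1 : 1 ≤ w := by omega
  set s : ℕ := w - 1 with hs
  have hmeq : m = 2 * (s + 1) := by omega
  obtain ⟨c, c', x, hgood⟩ := main17 s
  refine ⟨c, c', x, fun k => ?_⟩
  -- the ratio of consecutive t values
  have htk : (2 * (k:ℚ) + 2) ^ 4 * t (k + 1) = (2 * (k:ℚ) + 1) ^ 4 * t k := by
    rw [ht (k+1), ht k, Finset.prod_range_succ, Nat.factorial_succ]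
    have hfac : ((Nat.factorial k : ℚ)) ≠ 0 := Nat.cast_ne_zero.2 (Nat.factorial_ne_zero k)
    have hk1 : ((k:ℚ) + 1) ≠ 0 := by positivity
    push_cast
    field_simp
    ring
  -- evaluate the polynomial identity at 4k
  have hpoly := congrArg (Polynomial.eval (4 * (k:ℚ))) hgood
  simp only [eval_add, eval_mul, eval_C, eval_pow, eval_X, eval_one] at hpoly
  have hLq : Polynomial.eval (4 * (k:ℚ)) (Lq17 x)
      = (4:ℚ)⁻¹ * ((4 * (k:ℚ) + 2) ^ 4 * ((x.eval (4 * ((k : ℤ) + 1)) : ℤ) : ℚ)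
          - (4 * (k:ℚ)) ^ 4 * ((x.eval (4 * (k : ℤ)) : ℤ) : ℚ)) := by
    rw [Lq17]
    simp only [eval_mul, eval_C, eval_sub, eval_pow, eval_add, eval_X, eval_comp, eval_ofNat]
    have e1 : (4 * (k:ℚ) + 4) = (((4 * ((k:ℤ) + 1)) : ℤ) : ℚ) := by push_cast; ring
    have e2 : (4 * (k:ℚ)) = (((4 * (k:ℤ)) : ℤ) : ℚ) := by push_cast; ring
    rw [e1, e2, eval_intCast_map, eval_intCast_map]
    norm_num
  rw [hLq] at hpoly
  have hdfeq : (Nat.doubleFactorial (m - 1) : ℚ) = (Nat.doubleFactorial (2 * s + 1) : ℚ) := by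
    rw [show m - 1 = 2 * s + 1 by omega]
  have hpoweq : (4 * (k:ℚ) + 1) ^ m = ((4 * (k:ℚ) + 1) ^ 2) ^ (s + 1) := by
    rw [hmeq, pow_mul]
  rw [hdfeq, hpoweq]
  linear_combination (t k) * hpoly + (-4 * ((x.eval (4 * ((k : ℤ) + 1)) : ℤ) : ℚ)) * htk
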